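/- The number of words over the alphabet {ρ, λ, μ} of length 3n that contain exactly n of each letter, and in which every prefix contains at least as many ρ's as λ's and at least as many λ's as μ's, equals 2·(3n)! / (n!·(n+1)!·(n+2)!). -/

import Mathlib

namespace TwoStacks

/-- A state of the two-stacks-in-series machine: remaining input,
stack 1, stack 2 (tops at the head), and the output so far. -/
structure St where
  inp : List ℕ
  s1 : List ℕ
  s2 : List ℕ
  out : List ℕ
deriving DecidableEq

/-- The three moves. -/
inductive Mv
  | rho  -- input → stack 1
  | lam  -- stack 1 → stack 2
  | mu   -- stack 2 → output
deriving DecidableEq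

/-- One move of the machine (`none` if the move is not applicable). -/
def step : Mv → St → Option St
  | .rho, ⟨x :: xs, s1, s2, o⟩ => some ⟨xs, x :: s1, s2, o⟩
  | .lam, ⟨i, x :: xs, s2, o⟩ => some ⟨i, xs, x :: s2, o⟩
  | .mu,  ⟨i, s1, x :: xs, o⟩ => some ⟨i, s1, xs, o ++ [x]⟩
  | _, _ => none

/-- Run a word of moves on a state. -/
def run (w : List Mv) (s : St) : Option St :=
  w.foldlM (fun s m => step m s) s

/-- The list 1,2,…,n. -/
def idSeq (n : ℕ) : List ℕ := (List.range n).map (· + 1)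

/-- The one-line notation p(1),…,p(n) (values in {1,…,n}) of a permutation. -/
def permList {n : ℕ} (p : Equiv.Perm (Fin n)) : List ℕ :=
  List.ofFn fun i => (p i : ℕ) + 1

/-- p is achievable: from input 1,…,n some word of moves outputs p(1),…,p(n). -/
def Achievable {n : ℕ} (p : Equiv.Perm (Fin n)) : Prop :=
  ∃ w, run w ⟨idSeq n, [], [], []⟩ = some ⟨[], [], [], permList p⟩

/-- p is sortable: from input p(1),…,p(n) some word of moves outputs 1,…,n. -/
def Sortable {n : ℕ} (p : Equiv.Perm (Fin n)) : Prop :=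
  ∃ w, run w ⟨permList p, [], [], []⟩ = some ⟨[], [], [], idSeq n⟩

/-- A list of (distinct) naturals is achievable as an output. -/
def AchList (l : List ℕ) : Prop :=
  ∃ w, run w ⟨idSeq l.length, [], [], []⟩ = some ⟨[], [], [], l⟩

/-- Standardization (pattern) of a list with distinct entries:
each entry is replaced by its rank (1-based). -/
def std (l : List ℕ) : List ℕ :=
  l.map fun x => (l.filter (· ≤ x)).length

/-- An operation sequence of length 3n: n of each letter, and every
prefix has #ρ ≥ #λ ≥ #μ. -/
def OpSeq (n : ℕ) (w : List Mv) : Prop :=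
  w.length = 3 * n ∧ w.count .rho = n ∧ w.count .lam = n ∧ w.count .mu = n ∧
  ∀ u, u <+: w → u.count .mu ≤ u.count .lam ∧ u.count .lam ≤ u.count .rho

/-- An x,y-Catalan word: word over {x,y} with equally many x's and y's
in which every prefix has at least as many x's as y's. -/
def CatWord (x y : Mv) (w : List Mv) : Prop :=
  (∀ m ∈ w, m = x ∨ m = y) ∧ w.count x = w.count y ∧
  ∀ u, u <+: w → u.count y ≤ u.count x

/-- Two words have the same effect: applied to any state on which both
are applicable, they give the same resulting state. -/
def SameEffect (v v' : List Mv) : Prop :=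
  ∀ s t t', run v s = some t → run v' s = some t' → t = t'

/-- Rank of a letter for the order ρ < λ < μ. -/
def rk : Mv → ℕ
  | .rho => 0
  | .lam => 1
  | .mu => 2

/-- The order ρ < λ < μ on letters. -/
def mlt (a b : Mv) : Prop := rk a < rk b

/-- Lexicographic order on words induced by ρ < λ < μ. -/
def wordLt (v v' : List Mv) : Prop := List.Lex mlt v v'

/-- No entry is immediately followed by its successor. -/
def IncAvoid (l : List ℕ) : Prop :=
  ∀ j (h : j + 1 < l.length), l.get ⟨j + 1, h⟩ ≠ l.get ⟨j, by omega⟩ + 1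

instance : Fintype Mv :=
  ⟨{.rho, .lam, .mu}, fun x => by cases x <;> simp⟩

/-- Words with prescribed letter counts satisfying the prefix condition. -/
def cnt (a b c : ℕ) : Set (List Mv) :=
  {w | w.count .rho = a ∧ w.count .lam = b ∧ w.count .mu = c ∧
    ∀ u, u <+: w → u.count .mu ≤ u.count .lam ∧ u.count .lam ≤ u.count .rho}

lemma length_eq (w : List Mv) :
    w.length = w.count .rho + w.count .lam + w.count .mu := by
  induction w with
  | nil => simp
  | cons m t ih => cases m <;> simp [List.count_cons, ih] <;> ring

lemma cnt_finite (a b c : ℕ) : (cnt a b c).Finite := by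
  apply (List.finite_length_eq Mv (a + b + c)).subset
  rintro w ⟨h1, h2, h3, -⟩
  simp only [Set.mem_setOf_eq, length_eq w, h1, h2, h3]

lemma cnt_order {a b c : ℕ} {w : List Mv} (h : w ∈ cnt a b c) : c ≤ b ∧ b ≤ a := by
  obtain ⟨h1, h2, h3, h4⟩ := h
  obtain ⟨e1, e2⟩ := h4 w (List.prefix_refl w)
  omega

lemma cnt_zero : cnt 0 0 0 = {([] : List Mv)} := by
  ext w
  simp only [cnt, Set.mem_setOf_eq, Set.mem_singleton_iff]
  constructor
  · rintro ⟨h1, h2, h3, -⟩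
    have := length_eq w
    rw [h1, h2, h3] at this
    exact List.length_eq_zero_iff.mp (by omega)
  · rintro rfl; simp

lemma cnt_a00 (a : ℕ) : cnt a 0 0 = {List.replicate a Mv.rho} := by
  ext w
  simp only [cnt, Set.mem_setOf_eq, Set.mem_singleton_iff]
  constructor
  · rintro ⟨h1, h2, h3, -⟩
    rw [List.eq_replicate_iff]
    refine ⟨by rw [length_eq w, h1, h2, h3]; omega, fun m hm => ?_⟩
    cases m with
    | rho => rfl
    | lam => exact absurd (List.count_pos_iff.mpr hm) (by omega)
    | mu => exact absurd (List.count_pos_iff.mpr hm) (by omega)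
  · rintro rfl
    refine ⟨by simp [List.count_replicate], by simp [List.count_replicate],
      by simp [List.count_replicate], fun u hu => ?_⟩
    constructor
    · calc u.count Mv.mu ≤ (List.replicate a Mv.rho).count Mv.mu := hu.count_le _
        _ = 0 := by simp [List.count_replicate]
        _ ≤ u.count Mv.lam := Nat.zero_le _
    · calc u.count Mv.lam ≤ (List.replicate a Mv.rho).count Mv.lam := hu.count_le _
        _ = 0 := by simp [List.count_replicate]
        _ ≤ u.count Mv.rho := Nat.zero_le _

lemma drop_mem {a b c : ℕ} {v : List Mv} {m : Mv} (h : v ++ [m] ∈ cnt a b c) :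
    v ∈ cnt (a - (if m = .rho then 1 else 0)) (b - (if m = .lam then 1 else 0))
      (c - (if m = .mu then 1 else 0)) := by
  obtain ⟨h1, h2, h3, h4⟩ := h
  refine ⟨?_, ?_, ?_, fun u hu => h4 u (hu.trans (List.prefix_append v [m]))⟩ <;>
    cases m <;> simp_all [List.count_append, List.count_cons] <;> omega

lemma concat_mem {a b c : ℕ} {v : List Mv} {m : Mv} (hv : v ∈ cnt a b c)
    (hm : (m = .rho → b ≤ a + 1) ∧ (m = .lam → b + 1 ≤ a ) ∧ (m = .mu → c + 1 ≤ b)) :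
    v ++ [m] ∈ cnt (a + (if m = .rho then 1 else 0)) (b + (if m = .lam then 1 else 0))
      (c + (if m = .mu then 1 else 0)) := by
  obtain ⟨hcb, hba⟩ := cnt_order hv
  obtain ⟨h1, h2, h3, h4⟩ := hv
  refine ⟨?_, ?_, ?_, fun u hu => ?_⟩
  · cases m <;> simp_all [List.count_append, List.count_cons]
  · cases m <;> simp_all [List.count_append, List.count_cons]
  · cases m <;> simp_all [List.count_append, List.count_cons]
  · rcases List.prefix_concat_iff.mp hu with rfl | hu'
    · rw [List.count_append, List.count_append]
      rw [List.count_append]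
      cases m <;> simp_all [List.count_cons] <;> omega
    · exact h4 u hu'

/-- The subset of `cnt a b c` consisting of words ending in `m`. -/
def cntE (a b c : ℕ) (m : Mv) : Set (List Mv) := {w ∈ cnt a b c | w.getLast? = some m}

lemma cnt_eq_union (a b c : ℕ) (h : 1 ≤ a + b + c) :
    cnt a b c = cntE a b c .rho ∪ cntE a b c .lam ∪ cntE a b c .mu := by
  ext w
  simp only [cntE, Set.mem_union, Set.mem_setOf_eq]
  constructor
  · intro hw
    have hne : w ≠ [] := by
      intro h0
      obtain ⟨h1, h2, h3, -⟩ := hw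
      subst h0; simp at h1 h2 h3; omega
    have hl := List.getLast?_eq_getLast hne
    cases e : w.getLast hne <;> rw [e] at hl <;> tauto
  · tauto

lemma cntE_image {a b c : ℕ} {m : Mv}
    (hm : (m = .rho → b ≤ a + 1) ∧ (m = .lam → b + 1 ≤ a) ∧ (m = .mu → c + 1 ≤ b)) :
    cntE (a + (if m = .rho then 1 else 0)) (b + (if m = .lam then 1 else 0))
        (c + (if m = .mu then 1 else 0)) m = (fun v => v ++ [m]) '' cnt a b c := by
  ext w
  simp only [cntE, Set.mem_setOf_eq, Set.mem_image]
  constructor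
  · rintro ⟨hw, hlast⟩
    have hne : w ≠ [] := by rintro rfl; simp at hlast
    have hgl : w.getLast hne = m := by
      have h := List.getLast?_eq_getLast hne
      rw [h] at hlast; exact Option.some_inj.mp hlast
    have hwm : w.dropLast ++ [m] = w := by
      rw [← hgl]; exact List.dropLast_append_getLast hne
    refine ⟨w.dropLast, ?_, hwm⟩
    have hw' : w.dropLast ++ [m] ∈ cnt (a + if m = .rho then 1 else 0)
        (b + if m = .lam then 1 else 0) (c + if m = .mu then 1 else 0) := by rwa [hwm]
    have := drop_mem hw'
    simpa using this
  · rintro ⟨v, hv, rfl⟩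
    exact ⟨concat_mem hv hm, by simp⟩

lemma cntE_ncard {a b c : ℕ} {m : Mv}
    (hm : (m = .rho → b ≤ a + 1) ∧ (m = .lam → b + 1 ≤ a) ∧ (m = .mu → c + 1 ≤ b)) :
    (cntE (a + (if m = .rho then 1 else 0)) (b + (if m = .lam then 1 else 0))
        (c + (if m = .mu then 1 else 0)) m).ncard = (cnt a b c).ncard := by
  rw [cntE_image hm]
  exact Set.ncard_image_of_injective _ (fun x y h => by simpa using h)

lemma cntE_empty_lam {a c : ℕ} : cntE a 0 c .lam = ∅ := by
  ext w
  simp only [cntE, Set.mem_setOf_eq, Set.mem_empty_iff_false, iff_false, not_and]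
  rintro ⟨-, h2, -, -⟩ hlast
  have hne : w ≠ [] := by rintro rfl; simp at hlast
  have : Mv.lam ∈ w := by
    rw [List.getLast?_eq_getLast hne] at hlast
    rw [← Option.some_inj.mp hlast]
    exact List.getLast_mem hne
  exact absurd (List.count_pos_iff.mpr this) (by omega)

lemma cntE_empty_mu {a b : ℕ} : cntE a b 0 .mu = ∅ := by
  ext w
  simp only [cntE, Set.mem_setOf_eq, Set.mem_empty_iff_false, iff_false, not_and]
  rintro ⟨-, -, h3, -⟩ hlast
  have hne : w ≠ [] := by rintro rfl; simp at hlast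
  have : Mv.mu ∈ w := by
    rw [List.getLast?_eq_getLast hne] at hlast
    rw [← Option.some_inj.mp hlast]
    exact List.getLast_mem hne
  exact absurd (List.count_pos_iff.mpr this) (by omega)

/-- The closed formula. -/
noncomputable def f (a b c : ℕ) : ℚ :=
  (a + b + c).factorial * ((a : ℚ) - b + 1) * ((b : ℚ) - c + 1) * ((a : ℚ) - c + 2) /
    (c.factorial * (b + 1).factorial * (a + 2).factorial)

lemma fact_pos' (k : ℕ) : (0 : ℚ) < (k.factorial : ℚ) := by
  exact_mod_cast k.factorial_pos

lemma f_a00 (a : ℕ) : f a 0 0 = 1 := by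
  unfold f
  have h2 : ((a + 2).factorial : ℚ) = (a + 2) * ((a + 1) * a.factorial) := by
    push_cast [show a + 2 = (a + 1) + 1 from rfl, Nat.factorial_succ]
    ring
  rw [h2]
  have := fact_pos' a
  field_simp
  ring

lemma fact_succ_q (k : ℕ) : ((k + 1).factorial : ℚ) = ((k : ℚ) + 1) * (k.factorial : ℚ) := by
  rw [Nat.factorial_succ]; push_cast; ring

lemma f_rec0 (a b : ℕ) :
    f (a + 1) (b + 1) 0 = f a (b + 1) 0 + f (a + 1) b 0 := by
  unfold f
  rw [show a + 1 + (b + 1) + 0 = (a + b + 1) + 1 from by ring,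
    show a + (b + 1) + 0 = a + b + 1 from by ring,
    show a + 1 + b + 0 = a + b + 1 from by ring,
    show a + 1 + 2 = (a + 2) + 1 from by ring,
    fact_succ_q (a + b + 1), fact_succ_q (a + 2), fact_succ_q (b + 1)]
  have h1 := fact_pos' (a + b + 1)
  have h2 := fact_pos' (a + 2)
  have h3 := fact_pos' (b + 1)
  have h4 := fact_pos' 0
  push_cast
  field_simp
  ring

lemma f_rec (a b c : ℕ) :
    f (a + 1) (b + 1) (c + 1) =
      f a (b + 1) (c + 1) + f (a + 1) b (c + 1) + f (a + 1) (b + 1) c := by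
  unfold f
  rw [show a + 1 + (b + 1) + (c + 1) = (a + b + c + 2) + 1 from by ring,
    show a + (b + 1) + (c + 1) = a + b + c + 2 from by ring,
    show a + 1 + b + (c + 1) = a + b + c + 2 from by ring,
    show a + 1 + (b + 1) + c = a + b + c + 2 from by ring,
    show a + 1 + 2 = (a + 2) + 1 from by ring,
    fact_succ_q (a + b + c + 2), fact_succ_q (a + 2), fact_succ_q (b + 1), fact_succ_q c]
  have h1 := fact_pos' (a + b + c + 2)
  have h2 := fact_pos' (a + 2)
  have h3 := fact_pos' (b + 1)
  have h4 := fact_pos' c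
  push_cast
  field_simp
  ring

lemma cnt_card : ∀ N a b c, a + b + c = N →
    ((cnt a b c).ncard : ℚ) = if c ≤ b ∧ b ≤ a then f a b c else 0 := by
  intro N
  induction N using Nat.strong_induction_on with
  | _ N ih =>
    intro a b c hN
    by_cases hord : c ≤ b ∧ b ≤ a
    swap
    · rw [if_neg hord]
      have : cnt a b c = ∅ := by
        ext w; simp only [Set.mem_empty_iff_false, iff_false]
        intro hw; exact hord (cnt_order hw)
      rw [this]; simp
    rw [if_pos hord]
    obtain ⟨hcb, hba⟩ := hord
    rcases Nat.eq_zero_or_pos b with hb | hb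
    · subst hb
      have hc : c = 0 := by omega
      subst hc
      rw [cnt_a00, f_a00]
      simp
    · -- b ≥ 1, hence a ≥ 1
      obtain ⟨b', rfl⟩ : ∃ b', b = b' + 1 := ⟨b - 1, by omega⟩
      obtain ⟨a', rfl⟩ : ∃ a', a = a' + 1 := ⟨a - 1, by omega⟩
      have hfin : (cnt (a' + 1) (b' + 1) c).Finite := cnt_finite _ _ _
      have hsplit := cnt_eq_union (a' + 1) (b' + 1) c (by omega)
      have hdisj1 : Disjoint (cntE (a' + 1) (b' + 1) c .rho)
          (cntE (a' + 1) (b' + 1) c .lam) := by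
        rw [Set.disjoint_left]; rintro w ⟨-, h1⟩ ⟨-, h2⟩; rw [h1] at h2; simp at h2
      have hdisj2 : Disjoint (cntE (a' + 1) (b' + 1) c .rho ∪ cntE (a' + 1) (b' + 1) c .lam)
          (cntE (a' + 1) (b' + 1) c .mu) := by
        rw [Set.disjoint_left]; rintro w (⟨-, h1⟩ | ⟨-, h1⟩) ⟨-, h2⟩ <;>
          rw [h1] at h2 <;> simp at h2
      have hf : ∀ m, (cntE (a' + 1) (b' + 1) c m).Finite := fun m =>
        hfin.subset (fun w hw => hw.1)
      have hcard : (cnt (a' + 1) (b' + 1) c).ncard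
          = (cntE (a' + 1) (b' + 1) c .rho).ncard + (cntE (a' + 1) (b' + 1) c .lam).ncard
            + (cntE (a' + 1) (b' + 1) c .mu).ncard := by
        rw [hsplit, Set.ncard_union_eq hdisj2 ((hf _).union (hf _)) (hf _),
          Set.ncard_union_eq hdisj1 (hf _) (hf _)]
      -- ρ part
      have hrho : (cntE (a' + 1) (b' + 1) c .rho).ncard = (cnt a' (b' + 1) c).ncard := by
        have := cntE_ncard (a := a') (b := b' + 1) (c := c) (m := .rho)
          ⟨fun _ => by omega, fun h => by simp at h, fun h => by simp at h⟩
        simpa using this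
      have hlam : (cntE (a' + 1) (b' + 1) c .lam).ncard = (cnt (a' + 1) b' c).ncard := by
        have := cntE_ncard (a := a' + 1) (b := b') (c := c) (m := .lam)
          ⟨fun h => by simp at h, fun _ => by omega, fun h => by simp at h⟩
        simpa using this
      -- IH applications
      have ih1 : ((cnt a' (b' + 1) c).ncard : ℚ) = f a' (b' + 1) c := by
        rw [ih (a' + (b' + 1) + c) (by omega) a' (b' + 1) c rfl]
        by_cases h : b' + 1 ≤ a'
        · rw [if_pos ⟨hcb, h⟩]
        · rw [if_neg (by tauto)]
          have hab : a' = b' := by omega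
          unfold f
          rw [hab]
          push_cast
          norm_num
      have ih2 : ((cnt (a' + 1) b' c).ncard : ℚ) = f (a' + 1) b' c := by
        rw [ih ((a' + 1) + b' + c) (by omega) (a' + 1) b' c rfl]
        by_cases h : c ≤ b'
        · rw [if_pos ⟨h, by omega⟩]
        · rw [if_neg (by tauto)]
          have hbc : b' = c - 1 ∧ c = b' + 1 := ⟨by omega, by omega⟩
          have : c = b' + 1 := by omega
          unfold f
          rw [this]
          push_cast
          norm_num
      rcases Nat.eq_zero_or_pos c with hc | hc
      · subst hc
        rw [hcard, hrho, hlam, cntE_empty_mu]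
        push_cast [ih1, ih2]
        rw [Set.ncard_empty]
        push_cast
        rw [f_rec0]
        ring
      · obtain ⟨c', rfl⟩ : ∃ c', c = c' + 1 := ⟨c - 1, by omega⟩
        have hmu : (cntE (a' + 1) (b' + 1) (c' + 1) .mu).ncard
            = (cnt (a' + 1) (b' + 1) c').ncard := by
          have := cntE_ncard (a := a' + 1) (b := b' + 1) (c := c') (m := .mu)
            ⟨fun h => by simp at h, fun h => by simp at h, fun _ => by omega⟩
          simpa using this
        have ih3 : ((cnt (a' + 1) (b' + 1) c').ncard : ℚ) = f (a' + 1) (b' + 1) c' := by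
          rw [ih ((a' + 1) + (b' + 1) + c') (by omega) (a' + 1) (b' + 1) c' rfl,
            if_pos ⟨by omega, by omega⟩]
        rw [hcard, hrho, hlam, hmu]
        push_cast [ih1, ih2, ih3]
        rw [f_rec]

lemma opSeq_eq_cnt (n : ℕ) : {w : List Mv | OpSeq n w} = cnt n n n := by
  ext w
  simp only [OpSeq, cnt, Set.mem_setOf_eq]
  constructor
  · rintro ⟨-, h2, h3, h4, h5⟩; exact ⟨h2, h3, h4, h5⟩
  · rintro ⟨h2, h3, h4, h5⟩
    exact ⟨by rw [length_eq w, h2, h3, h4]; ring, h2, h3, h4, h5⟩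

theorem count_operation_sequences (n : ℕ) :
    {w : List Mv | OpSeq n w}.ncard =
      2 * (3 * n).factorial /
        (n.factorial * (n + 1).factorial * (n + 2).factorial) := by
  have key : (({w : List Mv | OpSeq n w}.ncard : ℚ)) = f n n n := by
    rw [opSeq_eq_cnt n, cnt_card (n + n + n) n n n rfl, if_pos ⟨le_refl n, le_refl n⟩]
  have hf : f n n n = 2 * ((3 * n).factorial : ℚ) /
      ((n.factorial : ℚ) * ((n + 1).factorial : ℚ) * ((n + 2).factorial : ℚ)) := by
    unfold f
    have : n + n + n = 3 * n := by ring
    rw [this]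
    push_cast
    ring_nf
  rw [hf] at key
  set N := {w : List Mv | OpSeq n w}.ncard with hN
  have hD : (0 : ℚ) < (n.factorial : ℚ) * ((n + 1).factorial : ℚ) * ((n + 2).factorial : ℚ) := by
    positivity
  have hmul : (N : ℚ) * ((n.factorial : ℚ) * ((n + 1).factorial : ℚ) * ((n + 2).factorial : ℚ))
      = 2 * ((3 * n).factorial : ℚ) := by
    rw [key]; field_simp
  have hmulN : N * (n.factorial * (n + 1).factorial * (n + 2).factorial)
      = 2 * (3 * n).factorial := by
    exact_mod_cast hmul
  refine (Nat.div_eq_of_eq_mul_left ?_ ?_).symm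
  · positivity
  · omega

end TwoStacks
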